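/- Let X and Y be Polish spaces, let Q1 and Q2 be probability measures on X and Y respectively, and let P be a probability measure on X × Y absolutely continuous with respect to the product measure Q = Q1 ⊗ Q2. Then the relative entropy satisfies H(P | Q) ≥ H(P1 | Q1) + H(P2 | Q2), where P1 and P2 are the marginals of P on X and Y. -/

import Mathlib

/-!
Disintegrating `P` along its first marginal `P₁`, the chain rule for the Kullback-Leibler
divergence gives `H(P | Q₁ ⊗ Q₂) = H(P₁ | Q₁) + H(P | P₁ ⊗ Q₂)`, and the data processing
inequality for the projection onto `Y` bounds the last term below by `H(P₂ | Q₂)`.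
The comparison is made in `ℝ≥0∞` through `klDiv`, whose `toReal` is `relEntropy` for
probability measures `μ ≪ ν`; integrability of `llr P (Q₁ ⊗ Q₂)` makes the left-hand side finite.
-/

open MeasureTheory

/-- Relative entropy (Kullback-Leibler divergence) `H(μ | ν) = ∫ log (dμ/dν) dμ`. -/
noncomputable def relEntropy {α : Type*} [MeasurableSpace α] (μ ν : Measure α) : ℝ :=
  ∫ x, llr μ ν x ∂μ

open ProbabilityTheory InformationTheory

section KullbackLeibler

variable {X Y : Type*} [MeasurableSpace X] [MeasurableSpace Y]

/-- Chain rule along the disintegration `ρ = ρ.fst ⊗ₘ ρ.condKernel`. -/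
lemma klDiv_prod_eq_klDiv_fst_add [StandardBorelSpace Y]
    (ρ : Measure (X × Y)) [IsFiniteMeasure ρ] (ν : Measure X) [IsFiniteMeasure ν]
    (ξ : Measure Y) [IsProbabilityMeasure ξ] :
    klDiv ρ (ν.prod ξ) = klDiv ρ.fst ν + klDiv ρ (ρ.fst.prod ξ) := by
  have := nonempty_of_isProbabilityMeasure ξ
  have h := klDiv_compProd_eq_add ρ.fst ν ρ.condKernel (Kernel.const X ξ)
  rwa [ρ.disintegrate, Measure.compProd_const, Measure.compProd_const] at h

lemma klDiv_fst_add_klDiv_snd_le [StandardBorelSpace Y]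
    (ρ : Measure (X × Y)) [IsProbabilityMeasure ρ] (ν : Measure X) [IsFiniteMeasure ν]
    (ξ : Measure Y) [IsProbabilityMeasure ξ] :
    klDiv ρ.fst ν + klDiv ρ.snd ξ ≤ klDiv ρ (ν.prod ξ) := by
  rw [klDiv_prod_eq_klDiv_fst_add]
  gcongr
  calc klDiv ρ.snd ξ = klDiv ρ.snd (ρ.fst.prod ξ).snd := by rw [Measure.snd_prod]
    _ ≤ klDiv ρ (ρ.fst.prod ξ) := klDiv_map_le _ _ measurable_snd

end KullbackLeibler

theorem relEntropy_prod_ge_add_marginals_general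
    {X Y : Type*} [MeasurableSpace X]
    [MeasurableSpace Y] [TopologicalSpace Y] [PolishSpace Y] [BorelSpace Y]
    (Q1 : Measure X) (Q2 : Measure Y) [IsProbabilityMeasure Q1] [IsProbabilityMeasure Q2]
    (P : Measure (X × Y)) [IsProbabilityMeasure P]
    (hac : P ≪ Q1.prod Q2)
    (hint : Integrable (llr P (Q1.prod Q2)) P) :
    relEntropy P (Q1.prod Q2) ≥
      relEntropy (P.map Prod.fst) Q1 + relEntropy (P.map Prod.snd) Q2 := by
  have hac1 : P.fst ≪ Q1 := Measure.fst_prod (μ := Q1) (ν := Q2) ▸ hac.map measurable_fst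
  have hac2 : P.snd ≪ Q2 := Measure.snd_prod (μ := Q1) (ν := Q2) ▸ hac.map measurable_snd
  have hle := klDiv_fst_add_klDiv_snd_le P Q1 Q2
  have hfin : klDiv P (Q1.prod Q2) ≠ ⊤ := klDiv_ne_top hac hint
  obtain ⟨hfin1, hfin2⟩ := ENNReal.add_ne_top.mp (ne_top_of_le_ne_top hfin hle)
  change relEntropy P (Q1.prod Q2) ≥ relEntropy P.fst Q1 + relEntropy P.snd Q2
  simp only [relEntropy, ← toReal_klDiv_of_measure_eq hac (by simp),
    ← toReal_klDiv_of_measure_eq hac1 (by simp), ← toReal_klDiv_of_measure_eq hac2 (by simp)]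
  rw [ge_iff_le, ← ENNReal.toReal_add hfin1 hfin2]
  exact ENNReal.toReal_mono hfin hle

/-- Chain rule inequality for the relative entropy with respect to a product reference
measure: for `P ≪ Q1 ⊗ Q2` on a product of Polish spaces,
`H(P | Q1 ⊗ Q2) ≥ H(P1 | Q1) + H(P2 | Q2)` where `P1, P2` are the marginals of `P`. -/
theorem relEntropy_prod_ge_add_marginals
    {X Y : Type*} [MeasurableSpace X] [TopologicalSpace X] [PolishSpace X] [BorelSpace X]
    [MeasurableSpace Y] [TopologicalSpace Y] [PolishSpace Y] [BorelSpace Y]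
    (Q1 : Measure X) (Q2 : Measure Y) [IsProbabilityMeasure Q1] [IsProbabilityMeasure Q2]
    (P : Measure (X × Y)) [IsProbabilityMeasure P]
    (hac : P ≪ Q1.prod Q2)
    (hint : Integrable (llr P (Q1.prod Q2)) P)
    (hint1 : Integrable (llr (P.map Prod.fst) Q1) (P.map Prod.fst))
    (hint2 : Integrable (llr (P.map Prod.snd) Q2) (P.map Prod.snd)) :
    relEntropy P (Q1.prod Q2) ≥
      relEntropy (P.map Prod.fst) Q1 + relEntropy (P.map Prod.snd) Q2 :=
  relEntropy_prod_ge_add_marginals_general Q1 Q2 P hac hint
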